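/- Let D ⊂ ℝᴺ be open and star-shaped with respect to every point of a ball on which ψ ∈ C_c^∞(D) with ∫ψ = 1 is supported (e.g. D convex). For an h-form ω on D define the Iwaniec–Lutoborski operator K ω(x) = ∫_D ψ(y) ∫₀¹ t^{h−1} ι_{x−y} ω(y + t(x−y)) dt dy. Then for every smooth h-form ω on D, the homotopy formula ω = d(Kω) + K(dω) holds, where d is the exterior differential and K acts in the appropriate degrees. -/

import Mathlib

open MeasureTheory Set
open scoped BigOperators
noncomputable section

/-- The space of (continuous) `k`-linear forms on `E`; a differential `k`-form is a
map `E → FormSpace E k` whose values are alternating (see `IsAltForm`). -/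
abbrev FormSpace (E : Type*) [NormedAddCommGroup E] [NormedSpace ℝ E] (k : ℕ) :=
  ContinuousMultilinearMap ℝ (fun _ : Fin k => E) ℝ

/-- A map `ω : E → FormSpace E k` is a differential `k`-form iff its values are
alternating multilinear forms. -/
def IsAltForm {E : Type*} [NormedAddCommGroup E] [NormedSpace ℝ E] {k : ℕ}
    (ω : E → FormSpace E k) : Prop :=
  ∀ (x : E) (v : Fin k → E) (i j : Fin k), i ≠ j → v i = v j → ω x v = 0

variable {E : Type*} [NormedAddCommGroup E] [NormedSpace ℝ E]

/-- The exterior differential of a differential `k`-form, evaluated at a point on a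
tuple of (constant) vectors: for a `k`-form with evaluation function `f`,
`(df)(x)(v₀,…,v_k) = ∑ᵢ (−1)ⁱ (∂_{vᵢ} f(·)(v₀,…,v̂ᵢ,…,v_k))(x)`. -/
def dEval {k : ℕ} (f : E → (Fin k → E) → ℝ) (x : E) (v : Fin (k + 1) → E) : ℝ :=
  ∑ i : Fin (k + 1), (-1 : ℝ) ^ (i : ℕ) *
    fderiv ℝ (fun y => f y (v ∘ i.succAbove)) x (v i)

/-- The wedge product of an `h`-form and a `k`-form (given by their evaluation
functions), evaluated at a point on a tuple of `h+k` vectors. -/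
def wedgeEval (h k : ℕ) (f : E → (Fin h → E) → ℝ) (g : E → (Fin k → E) → ℝ)
    (x : E) (v : Fin (h + k) → E) : ℝ :=
  ((h.factorial * k.factorial : ℝ))⁻¹ *
    ∑ σ : Equiv.Perm (Fin (h + k)), ((Equiv.Perm.sign σ : ℤ) : ℝ) *
      (f x (fun i => v (σ (Fin.castAdd k i))) * g x (fun j => v (σ (Fin.natAdd h j))))

end
noncomputable section

set_option maxHeartbeats 1000000
set_option synthInstance.maxHeartbeats 400000
set_option linter.unusedSectionVars false
set_option linter.unusedVariables false

section ILAux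

variable {E : Type*} [NormedAddCommGroup E] [NormedSpace ℝ E]

abbrev evA {k : ℕ} (u : Fin k → E) : FormSpace E k →L[ℝ] ℝ :=
  ContinuousMultilinearMap.apply ℝ (fun _ : Fin k => E) ℝ u

namespace IL
lemma cons_comp_succAbove_zero {m : ℕ} (a : E) (v : Fin (m + 1) → E) :
    (Fin.cons a v : Fin (m + 2) → E) ∘ (0 : Fin (m + 2)).succAbove = v := by
  funext j; simp [Fin.succAbove_zero]

lemma cons_comp_succAbove_succ {m : ℕ} (a : E) (v : Fin (m + 1) → E) (i : Fin (m + 1)) :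
    (Fin.cons a v : Fin (m + 2) → E) ∘ (i.succ).succAbove = Fin.cons a (v ∘ i.succAbove) := by
  funext j
  induction j using Fin.cases with
  | zero => simp
  | succ k => simp [Fin.succ_succAbove_succ]

lemma alt_sign {m : ℕ} (ω : E → FormSpace E (m + 1)) (hωalt : IsAltForm ω) (z : E)
    (v : Fin (m + 1) → E) (i : Fin (m + 1)) :
    ω z (Fin.cons (v i) (v ∘ i.succAbove)) = (-1 : ℝ) ^ (i : ℕ) * ω z v := by
  let g : AlternatingMap ℝ E ℝ (Fin (m + 1)) :=
    { (ω z).toMultilinearMap with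
      map_eq_zero_of_eq' := fun w a b hab hne => hωalt z w a b hne hab }
  have h1 : Fin.cons (v i) (v ∘ i.succAbove) = v ∘ (i.cycleRange.symm) := by
    funext j
    induction j using Fin.cases with
    | zero => simp [Fin.cycleRange_symm_zero]
    | succ k => simp [Fin.cycleRange_symm_succ]
  have h2 : ω z (Fin.cons (v i) (v ∘ i.succAbove)) = g (v ∘ (i.cycleRange.symm)) := by
    rw [h1]; rfl
  rw [h2, AlternatingMap.map_perm, Equiv.Perm.sign_symm, Fin.sign_cycleRange]
  have : g v = ω z v := rfl
  rw [this]
  simp [Units.smul_def]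



lemma norm_cons_prod {m : ℕ} (u : E) (w : Fin m → E) :
    (∏ i : Fin (m + 1), ‖(Fin.cons u w : Fin (m + 1) → E) i‖) = ‖u‖ * ∏ i, ‖w i‖ := by
  rw [Fin.prod_univ_succ]; simp

/-- `f ↦ u ↦ f (cons u w)` as a continuous bilinear map. -/
def consB {m : ℕ} (w : Fin m → E) : FormSpace E (m + 1) →L[ℝ] E →L[ℝ] ℝ :=
  LinearMap.mkContinuous₂
    (LinearMap.mk₂ ℝ (fun (f : FormSpace E (m + 1)) (u : E) => f (Fin.cons u w))
      (fun f g u => rfl) (fun c f u => rfl)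
      (fun f u₁ u₂ => f.cons_add w u₁ u₂) (fun c f u => f.cons_smul w c u))
    (∏ i, ‖w i‖)
    (fun f u => by
      calc ‖f (Fin.cons u w)‖
          ≤ ‖f‖ * ∏ i : Fin (m + 1), ‖(Fin.cons u w : Fin (m + 1) → E) i‖ := f.le_opNorm _
      _ = (∏ i, ‖w i‖) * ‖f‖ * ‖u‖ := by rw [norm_cons_prod]; ring)

@[simp] lemma consB_apply {m : ℕ} (w : Fin m → E) (f : FormSpace E (m + 1)) (u : E) :
    consB w f u = f (Fin.cons u w) := rfl

lemma consB_le {m : ℕ} (w : Fin m → E) (f : FormSpace E (m + 1)) :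
    ‖consB w f‖ ≤ (∏ i, ‖w i‖) * ‖f‖ := by
  refine ContinuousLinearMap.opNorm_le_bound _ (by positivity) (fun u => ?_)
  calc ‖consB w f u‖
      ≤ ‖f‖ * ∏ i : Fin (m + 1), ‖(Fin.cons u w : Fin (m + 1) → E) i‖ := f.le_opNorm _
  _ = (∏ i, ‖w i‖) * ‖f‖ * ‖u‖ := by rw [norm_cons_prod]; ring

/-- `A ↦ a ↦ (u ↦ A u (cons a w))` as a continuous bilinear map. -/
def Bmap {m : ℕ} (w : Fin m → E) :
    (E →L[ℝ] FormSpace E (m + 1)) →L[ℝ] E →L[ℝ] E →L[ℝ] ℝ :=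
  LinearMap.mkContinuous₂
    (LinearMap.mk₂ ℝ
      (fun (A : E →L[ℝ] FormSpace E (m + 1)) (a : E) => (evA (Fin.cons a w)).comp A)
      (fun A B a => by ext u; simp)
      (fun c A a => by ext u; simp)
      (fun A a₁ a₂ => by ext u; exact (A u).cons_add w a₁ a₂)
      (fun c A a => by ext u; exact (A u).cons_smul w c a))
    (∏ i, ‖w i‖)
    (fun A a => by
      refine ContinuousLinearMap.opNorm_le_bound _ (by positivity) (fun u => ?_)
      calc ‖((evA (Fin.cons a w)).comp A) u‖ = ‖A u (Fin.cons a w)‖ := rfl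
      _ ≤ ‖A u‖ * ∏ i : Fin (m + 1), ‖(Fin.cons a w : Fin (m + 1) → E) i‖ :=
          (A u).le_opNorm _
      _ = (‖a‖ * ∏ i, ‖w i‖) * ‖A u‖ := by rw [norm_cons_prod]; ring
      _ ≤ (‖a‖ * ∏ i, ‖w i‖) * (‖A‖ * ‖u‖) :=
          mul_le_mul_of_nonneg_left (A.le_opNorm u) (by positivity)
      _ = (∏ i, ‖w i‖) * ‖A‖ * ‖a‖ * ‖u‖ := by ring)

@[simp] lemma Bmap_apply {m : ℕ} (w : Fin m → E) (A : E →L[ℝ] FormSpace E (m + 1))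
    (a u : E) : Bmap w A a u = A u (Fin.cons a w) := rfl

lemma Bmap_le {m : ℕ} (w : Fin m → E) (A : E →L[ℝ] FormSpace E (m + 1)) (a : E) :
    ‖Bmap w A a‖ ≤ (∏ i, ‖w i‖) * ‖A‖ * ‖a‖ := by
  refine ContinuousLinearMap.opNorm_le_bound _ (by positivity) (fun u => ?_)
  calc ‖Bmap w A a u‖ = ‖A u (Fin.cons a w)‖ := rfl
  _ ≤ ‖A u‖ * ∏ i : Fin (m + 1), ‖(Fin.cons a w : Fin (m + 1) → E) i‖ := (A u).le_opNorm _
  _ = (‖a‖ * ∏ i, ‖w i‖) * ‖A u‖ := by rw [norm_cons_prod]; ring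
  _ ≤ (‖a‖ * ∏ i, ‖w i‖) * (‖A‖ * ‖u‖) :=
      mul_le_mul_of_nonneg_left (A.le_opNorm u) (by positivity)
  _ = (∏ i, ‖w i‖) * ‖A‖ * ‖a‖ * ‖u‖ := by ring

/-- integrand of the derivative of the inner integral -/
def iF' {m : ℕ} (ω : E → FormSpace E (m + 1)) (y x' : E) (w : Fin m → E) (t : ℝ) :
    E →L[ℝ] ℝ :=
  t ^ (m + 1) • Bmap w (fderiv ℝ ω (y + t • (x' - y))) (x' - y) +
    t ^ m • consB w (ω (y + t • (x' - y)))

lemma iF'_apply {m : ℕ} (ω : E → FormSpace E (m + 1)) (y x' : E) (w : Fin m → E) (t : ℝ)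
    (u : E) :
    iF' ω y x' w t u =
      t ^ (m + 1) * fderiv ℝ ω (y + t • (x' - y)) u (Fin.cons (x' - y) w) +
        t ^ m * ω (y + t • (x' - y)) (Fin.cons u w) := by
  simp only [iF', ContinuousLinearMap.add_apply, ContinuousLinearMap.smul_apply,
    Bmap_apply, consB_apply, smul_eq_mul]

lemma iF'_norm_le {m : ℕ} (ω : E → FormSpace E (m + 1)) (y x' : E) (w : Fin m → E) {t : ℝ}
    (ht : t ∈ Set.Ioc (0:ℝ) 1) {M₀ M₁ R : ℝ}
    (h₀ : ‖ω (y + t • (x' - y))‖ ≤ M₀) (h₁ : ‖fderiv ℝ ω (y + t • (x' - y))‖ ≤ M₁)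
    (hR : ‖x' - y‖ ≤ R) :
    ‖iF' ω y x' w t‖ ≤ (∏ i, ‖w i‖) * (M₁ * R + M₀) := by
  have hP : (0:ℝ) ≤ ∏ i, ‖w i‖ := by positivity
  have ht1 : |t| ≤ 1 := by rw [abs_of_pos ht.1]; exact ht.2
  have htp : ∀ k : ℕ, |t| ^ k ≤ 1 := fun k => pow_le_one₀ (abs_nonneg t) ht1
  have h1 : ‖t ^ (m+1) • Bmap w (fderiv ℝ ω (y + t • (x' - y))) (x' - y)‖
      ≤ (∏ i, ‖w i‖) * (M₁ * R) := by
    refine (norm_smul_le (t ^ (m+1)) (Bmap w (fderiv ℝ ω (y + t • (x' - y))) (x' - y))).trans ?_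
    rw [norm_pow, Real.norm_eq_abs]
    calc |t| ^ (m+1) * ‖Bmap w (fderiv ℝ ω (y + t • (x' - y))) (x' - y)‖
        ≤ 1 * ((∏ i, ‖w i‖) * ‖fderiv ℝ ω (y + t • (x' - y))‖ * ‖x' - y‖) :=
          mul_le_mul (htp _) (Bmap_le _ _ _) (norm_nonneg _) zero_le_one
    _ ≤ (∏ i, ‖w i‖) * (M₁ * R) := by
        rw [one_mul, mul_assoc]
        exact mul_le_mul_of_nonneg_left
          (mul_le_mul h₁ hR (norm_nonneg _) ((ContinuousLinearMap.opNorm_nonneg _).trans h₁)) hP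
  have h2 : ‖t ^ m • consB w (ω (y + t • (x' - y)))‖ ≤ (∏ i, ‖w i‖) * M₀ := by
    refine (norm_smul_le (t ^ m) (consB w (ω (y + t • (x' - y))))).trans ?_
    rw [norm_pow, Real.norm_eq_abs]
    calc |t| ^ m * ‖consB w (ω (y + t • (x' - y)))‖
        ≤ 1 * ((∏ i, ‖w i‖) * ‖ω (y + t • (x' - y))‖) :=
          mul_le_mul (htp _) (consB_le _ _) (norm_nonneg _) zero_le_one
    _ ≤ (∏ i, ‖w i‖) * M₀ := by rw [one_mul]; exact mul_le_mul_of_nonneg_left h₀ hP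
  calc ‖iF' ω y x' w t‖ ≤ _ + _ := norm_add_le _ _
  _ ≤ (∏ i, ‖w i‖) * (M₁ * R) + (∏ i, ‖w i‖) * M₀ := add_le_add h1 h2
  _ = (∏ i, ‖w i‖) * (M₁ * R + M₀) := by ring

variable {m : ℕ} {ω : E → FormSpace E (m + 1)} {D : Set E}

lemma inner_hasFDerivAt (hD : IsOpen D) (hω : ContDiffOn ℝ (⊤ : ℕ∞) ω D) (y : E) (w : Fin m → E)
    (t : ℝ) {z : E} (hz : y + t • (z - y) ∈ D) :
    HasFDerivAt (fun x' => t ^ m * ω (y + t • (x' - y)) (Fin.cons (x' - y) w))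
      (iF' ω y z w t) z := by
  have hdiff : DifferentiableAt ℝ ω (y + t • (z - y)) :=
    (hω.differentiableOn (by simp)).differentiableAt (hD.mem_nhds hz)
  have hc : HasFDerivAt (fun x' : E => y + t • (x' - y))
      (t • ContinuousLinearMap.id ℝ E) z :=
    (((hasFDerivAt_id z).sub_const y).const_smul t).const_add y
  have hω' : HasFDerivAt (fun x' => ω (y + t • (x' - y)))
      ((fderiv ℝ ω (y + t • (z - y))).comp (t • ContinuousLinearMap.id ℝ E)) z :=
    hdiff.hasFDerivAt.comp z hc
  have hφ : HasFDerivAt (fun x' => consB w (ω (y + t • (x' - y))))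
      ((consB w).comp ((fderiv ℝ ω (y + t • (z - y))).comp (t • ContinuousLinearMap.id ℝ E)))
      z := (consB w).hasFDerivAt.comp z hω'
  have hu : HasFDerivAt (fun x' : E => x' - y) (ContinuousLinearMap.id ℝ E) z :=
    (hasFDerivAt_id z).sub_const y
  have hmul := (hφ.clm_apply hu).const_mul ((t:ℝ) ^ m)
  have hfun : (fun x' => t ^ m * (consB w (ω (y + t • (x' - y)))) (x' - y))
      = fun x' => t ^ m * ω (y + t • (x' - y)) (Fin.cons (x' - y) w) := rfl
  rw [hfun] at hmul
  refine hmul.congr_fderiv ?_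
  ext u
  simp only [iF', ContinuousLinearMap.add_apply, ContinuousLinearMap.smul_apply,
    ContinuousLinearMap.comp_apply, ContinuousLinearMap.flip_apply,
    ContinuousLinearMap.coe_comp', Function.comp_apply,
    ContinuousLinearMap.id_apply, Bmap_apply, consB_apply, smul_eq_mul, _root_.map_smul,
    ContinuousMultilinearMap.smul_apply]
  ring


variable {m : ℕ} {ω : E → FormSpace E (m + 1)} {D : Set E}

lemma hasFDerivAt_eval (hD : IsOpen D) (hω : ContDiffOn ℝ (⊤ : ℕ∞) ω D) {z : E} (hz : z ∈ D)
    (u : Fin (m + 1) → E) :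
    HasFDerivAt (fun z' => ω z' u) ((evA u).comp (fderiv ℝ ω z)) z := by
  have hdiff : DifferentiableAt ℝ ω z :=
    (hω.differentiableOn (by simp)).differentiableAt (hD.mem_nhds hz)
  exact (evA u).hasFDerivAt.comp z hdiff.hasFDerivAt

lemma fderiv_eval (hD : IsOpen D) (hω : ContDiffOn ℝ (⊤ : ℕ∞) ω D) {z : E} (hz : z ∈ D)
    (u : Fin (m + 1) → E) :
    fderiv ℝ (fun z' => ω z' u) z = (evA u).comp (fderiv ℝ ω z) :=
  (hasFDerivAt_eval hD hω hz u).fderiv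

lemma dEval_eq (hD : IsOpen D) (hω : ContDiffOn ℝ (⊤ : ℕ∞) ω D) {z : E} (hz : z ∈ D)
    (u : Fin (m + 2) → E) :
    dEval (fun z' (u' : Fin (m + 1) → E) => ω z' u') z u
      = ∑ j : Fin (m + 2), (-1:ℝ)^(j:ℕ) * fderiv ℝ ω z (u j) (u ∘ j.succAbove) := by
  unfold dEval
  refine Finset.sum_congr rfl fun j _ => ?_
  have h : (fun y => (fun z' (u' : Fin (m + 1) → E) => ω z' u') y (u ∘ j.succAbove))
      = fun y => ω y (u ∘ j.succAbove) := rfl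
  rw [h, fderiv_eval hD hω hz]
  rfl


/-- joint continuity of `iF'` in `(y, t)` for fixed `x'`. -/
lemma contOn_iF'_joint (hD : IsOpen D) (hω : ContDiffOn ℝ (⊤ : ℕ∞) ω D) (x' : E) (w : Fin m → E) :
    ContinuousOn (fun q : E × ℝ => iF' ω q.1 x' w q.2)
      {q : E × ℝ | q.1 + q.2 • (x' - q.1) ∈ D} := by
  set S := {q : E × ℝ | q.1 + q.2 • (x' - q.1) ∈ D}
  have hπ : Continuous (fun q : E × ℝ => q.1 + q.2 • (x' - q.1)) := by fun_prop
  have hmaps : MapsTo (fun q : E × ℝ => q.1 + q.2 • (x' - q.1)) S D := fun q hq => hq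
  have hfd : ContinuousOn (fderiv ℝ ω) D := hω.continuousOn_fderiv_of_isOpen hD (by simp)
  have h1 : ContinuousOn (fun q : E × ℝ => fderiv ℝ ω (q.1 + q.2 • (x' - q.1))) S :=
    hfd.comp hπ.continuousOn hmaps
  have h2 : ContinuousOn (fun q : E × ℝ => ω (q.1 + q.2 • (x' - q.1))) S :=
    hω.continuousOn.comp hπ.continuousOn hmaps
  have hsub : ContinuousOn (fun q : E × ℝ => x' - q.1) S :=
    (continuous_const.sub continuous_fst).continuousOn
  exact (((continuous_snd.pow (m+1)).continuousOn).smul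
      ((((Bmap w).continuous.comp_continuousOn h1)).clm_apply hsub)).add
    (((continuous_snd.pow m).continuousOn).smul
      ((consB w).continuous.comp_continuousOn h2))

/-- joint continuity of the inner scalar integrand in `(y, t)` for fixed `x'`. -/
lemma contOn_scalar_joint (hD : IsOpen D) (hω : ContDiffOn ℝ (⊤ : ℕ∞) ω D) (x' : E) (w : Fin m → E) :
    ContinuousOn (fun q : E × ℝ => q.2 ^ m * ω (q.1 + q.2 • (x' - q.1))
        (Fin.cons (x' - q.1) w))
      {q : E × ℝ | q.1 + q.2 • (x' - q.1) ∈ D} := by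
  set S := {q : E × ℝ | q.1 + q.2 • (x' - q.1) ∈ D}
  have hπ : Continuous (fun q : E × ℝ => q.1 + q.2 • (x' - q.1)) := by fun_prop
  have hmaps : MapsTo (fun q : E × ℝ => q.1 + q.2 • (x' - q.1)) S D := fun q hq => hq
  have h2 : ContinuousOn (fun q : E × ℝ => ω (q.1 + q.2 • (x' - q.1))) S :=
    hω.continuousOn.comp hπ.continuousOn hmaps
  have hsub : ContinuousOn (fun q : E × ℝ => x' - q.1) S :=
    (continuous_const.sub continuous_fst).continuousOn
  exact ((continuous_snd.pow m).continuousOn).mul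
    (((consB w).continuous.comp_continuousOn h2).clm_apply hsub)

/-- joint continuity of the `dEval` integrand in `(y, t)` for fixed `x`. -/
lemma contOn_dEval_joint (hD : IsOpen D) (hω : ContDiffOn ℝ (⊤ : ℕ∞) ω D) (x : E)
    (v : Fin (m + 1) → E) :
    ContinuousOn (fun q : E × ℝ => q.2 ^ (m + 1) *
        dEval (fun z (u : Fin (m+1) → E) => ω z u) (q.1 + q.2 • (x - q.1))
          (Fin.cons (x - q.1) v))
      {q : E × ℝ | q.1 + q.2 • (x - q.1) ∈ D} := by
  set S := {q : E × ℝ | q.1 + q.2 • (x - q.1) ∈ D} with hS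
  have hπ : Continuous (fun q : E × ℝ => q.1 + q.2 • (x - q.1)) := by fun_prop
  have hmaps : MapsTo (fun q : E × ℝ => q.1 + q.2 • (x - q.1)) S D := fun q hq => hq
  have hfd : ContinuousOn (fderiv ℝ ω) D := hω.continuousOn_fderiv_of_isOpen hD (by simp)
  have h1 : ContinuousOn (fun q : E × ℝ => fderiv ℝ ω (q.1 + q.2 • (x - q.1))) S :=
    hfd.comp hπ.continuousOn hmaps
  have hsub : ContinuousOn (fun q : E × ℝ => x - q.1) S :=
    (continuous_const.sub continuous_fst).continuousOn
  -- rewrite dEval on S by the explicit formula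
  refine ContinuousOn.congr (f := fun q : E × ℝ => q.2 ^ (m + 1) *
      ((fderiv ℝ ω (q.1 + q.2 • (x - q.1)) (x - q.1)) v +
        ∑ i : Fin (m + 1), (-1:ℝ)^((i:ℕ)+1) *
          (Bmap (v ∘ i.succAbove) (fderiv ℝ ω (q.1 + q.2 • (x - q.1))) (x - q.1)) (v i)))
    ?_ ?_
  · refine ((continuous_snd.pow (m+1)).continuousOn).mul ?_
    refine ContinuousOn.add ?_ ?_
    · exact ((evA v).continuous.comp_continuousOn (h1.clm_apply hsub))
    · refine continuousOn_finset_sum _ fun i _ => continuousOn_const.mul ?_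
      exact (((Bmap (v ∘ i.succAbove)).continuous.comp_continuousOn h1).clm_apply
        hsub).clm_apply continuousOn_const
  · intro q hq
    have hmem : q.1 + q.2 • (x - q.1) ∈ D := hq
    dsimp only
    rw [dEval_eq hD hω hmem]
    congr 1
    rw [Fin.sum_univ_succ]
    congr 1
    · rw [cons_comp_succAbove_zero]
      simp only [Fin.cons_zero, Fin.val_zero, pow_zero, one_mul,
        ContinuousMultilinearMap.apply_apply]
    · refine Finset.sum_congr rfl fun i _ => ?_
      rw [cons_comp_succAbove_succ]
      simp only [Bmap_apply, Fin.cons_succ, Fin.val_succ]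

lemma key_pointwise (hD : IsOpen D) (hω : ContDiffOn ℝ (⊤ : ℕ∞) ω D) (hωalt : IsAltForm ω)
    (x y : E) (v : Fin (m + 1) → E)
    (hseg : ∀ t ∈ Icc (0:ℝ) 1, y + t • (x - y) ∈ D) :
    (∑ i : Fin (m + 1), (-1:ℝ)^(i:ℕ) *
        (∫ t in (0:ℝ)..1, iF' ω y x (v ∘ i.succAbove) t (v i)))
      + (∫ t in (0:ℝ)..1, t ^ (m + 1) *
          dEval (fun z (u : Fin (m+1) → E) => ω z u) (y + t • (x - y)) (Fin.cons (x - y) v))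
    = ω x v := by
  have huIcc : uIcc (0:ℝ) 1 = Icc 0 1 := uIcc_of_le zero_le_one
  have hmk : ∀ t ∈ Icc (0:ℝ) 1, ((y, t) : E × ℝ) ∈
      {q : E × ℝ | q.1 + q.2 • (x - q.1) ∈ D} := fun t ht => hseg t ht
  -- continuity of the various integrands in t on [0,1]
  have hCiF : ∀ i : Fin (m + 1),
      ContinuousOn (fun t => iF' ω y x (v ∘ i.succAbove) t (v i)) (Icc (0:ℝ) 1) := by
    intro i
    have h1 : ContinuousOn (fun t => iF' ω y x (v ∘ i.succAbove) t) (Icc (0:ℝ) 1) :=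
      (contOn_iF'_joint hD hω x (v ∘ i.succAbove)).comp
        (Continuous.prodMk_right y).continuousOn hmk
    exact h1.clm_apply continuousOn_const
  have hC2 : ContinuousOn (fun t : ℝ => t ^ (m + 1) *
      dEval (fun z (u : Fin (m+1) → E) => ω z u) (y + t • (x - y)) (Fin.cons (x - y) v))
      (Icc (0:ℝ) 1) :=
    (contOn_dEval_joint hD hω x v).comp (Continuous.prodMk_right y).continuousOn hmk
  have hInt_iF : ∀ i : Fin (m + 1), IntervalIntegrable
      (fun t => (-1:ℝ)^(i:ℕ) * iF' ω y x (v ∘ i.succAbove) t (v i)) volume 0 1 := by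
    intro i
    apply ContinuousOn.intervalIntegrable
    rw [huIcc]
    exact continuousOn_const.mul (hCiF i)
  have hInt2 : IntervalIntegrable (fun t : ℝ => t ^ (m + 1) *
      dEval (fun z (u : Fin (m+1) → E) => ω z u) (y + t • (x - y)) (Fin.cons (x - y) v))
      volume 0 1 := by
    apply ContinuousOn.intervalIntegrable; rw [huIcc]; exact hC2
  -- step 1: push constants and the sum inside the integral
  have hstep1 : (∑ i : Fin (m + 1), (-1:ℝ)^(i:ℕ) *
        (∫ t in (0:ℝ)..1, iF' ω y x (v ∘ i.succAbove) t (v i)))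
      = ∫ t in (0:ℝ)..1, ∑ i : Fin (m + 1),
          (-1:ℝ)^(i:ℕ) * iF' ω y x (v ∘ i.succAbove) t (v i) := by
    simp_rw [← intervalIntegral.integral_const_mul]
    rw [← intervalIntegral.integral_finset_sum (fun i _ => hInt_iF i)]
  have hIntSum : IntervalIntegrable (fun t => ∑ i : Fin (m + 1),
      (-1:ℝ)^(i:ℕ) * iF' ω y x (v ∘ i.succAbove) t (v i)) volume 0 1 := by
    apply ContinuousOn.intervalIntegrable; rw [huIcc]
    exact continuousOn_finset_sum _ fun i _ => continuousOn_const.mul (hCiF i)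
  rw [hstep1, ← intervalIntegral.integral_add hIntSum hInt2]
  -- the total integrand equals the derivative of t ↦ t^(m+1) * ω (y+t(x-y)) v
  have hEq : EqOn
      (fun t : ℝ => (∑ i : Fin (m + 1),
          (-1:ℝ)^(i:ℕ) * iF' ω y x (v ∘ i.succAbove) t (v i)) +
        t ^ (m + 1) * dEval (fun z (u : Fin (m+1) → E) => ω z u) (y + t • (x - y))
          (Fin.cons (x - y) v))
      (fun t : ℝ => ((m:ℝ) + 1) * t ^ m * ω (y + t • (x - y)) v +
        t ^ (m + 1) * fderiv ℝ ω (y + t • (x - y)) (x - y) v)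
      (uIcc (0:ℝ) 1) := by
    intro t ht
    rw [huIcc] at ht
    have hz : y + t • (x - y) ∈ D := hseg t ht
    dsimp only
    have hdE : dEval (fun z (u : Fin (m+1) → E) => ω z u) (y + t • (x - y))
        (Fin.cons (x - y) v)
        = fderiv ℝ ω (y + t • (x - y)) (x - y) v
          + ∑ i : Fin (m + 1), (-1:ℝ)^((i:ℕ)+1) *
              fderiv ℝ ω (y + t • (x - y)) (v i) (Fin.cons (x - y) (v ∘ i.succAbove)) := by
      rw [dEval_eq hD hω hz, Fin.sum_univ_succ, cons_comp_succAbove_zero]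
      congr 1
      · simp
      · exact Finset.sum_congr rfl fun i _ => by
          rw [cons_comp_succAbove_succ]
          simp only [Fin.cons_succ, Fin.val_succ]
    rw [hdE]
    have hterm : ∀ i : Fin (m + 1),
        (-1:ℝ)^(i:ℕ) * iF' ω y x (v ∘ i.succAbove) t (v i)
          = (-1:ℝ)^(i:ℕ) * (t ^ (m+1) *
              fderiv ℝ ω (y + t • (x - y)) (v i) (Fin.cons (x - y) (v ∘ i.succAbove)))
            + t ^ m * ω (y + t • (x - y)) v := by
      intro i
      rw [iF'_apply, alt_sign ω hωalt _ v i]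
      have h4 : ((-1:ℝ))^(i:ℕ) * ((-1:ℝ))^(i:ℕ) = 1 := by
        rw [← pow_add]; exact Even.neg_one_pow ⟨(i:ℕ), rfl⟩
      linear_combination (t ^ m * ω (y + t • (x - y)) v) * h4
    rw [Finset.sum_congr rfl (fun i _ => hterm i), Finset.sum_add_distrib,
      Finset.sum_const, Finset.card_univ, Fintype.card_fin]
    have hcancel : (∑ i : Fin (m + 1), (-1:ℝ)^(i:ℕ) * (t ^ (m+1) *
          fderiv ℝ ω (y + t • (x - y)) (v i) (Fin.cons (x - y) (v ∘ i.succAbove))))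
        + t ^ (m+1) * (∑ i : Fin (m + 1), (-1:ℝ)^((i:ℕ)+1) *
          fderiv ℝ ω (y + t • (x - y)) (v i) (Fin.cons (x - y) (v ∘ i.succAbove))) = 0 := by
      rw [Finset.mul_sum, ← Finset.sum_add_distrib]
      exact Finset.sum_eq_zero fun i _ => by rw [pow_succ]; ring
    simp only [nsmul_eq_mul]
    push_cast
    linear_combination hcancel
  rw [intervalIntegral.integral_congr hEq]
  -- FTC
  have hC0 : ContinuousOn (fun t : ℝ => ω (y + t • (x - y)) v) (Icc (0:ℝ) 1) := by
    have hπ : Continuous (fun t : ℝ => y + t • (x - y)) := by fun_prop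
    exact (evA v).continuous.comp_continuousOn
      (hω.continuousOn.comp hπ.continuousOn hseg)
  have hC1 : ContinuousOn (fun t : ℝ => fderiv ℝ ω (y + t • (x - y)) (x - y) v)
      (Icc (0:ℝ) 1) := by
    have hπ : Continuous (fun t : ℝ => y + t • (x - y)) := by fun_prop
    have h1 : ContinuousOn (fun t : ℝ => fderiv ℝ ω (y + t • (x - y))) (Icc (0:ℝ) 1) :=
      (hω.continuousOn_fderiv_of_isOpen hD (by simp)).comp hπ.continuousOn hseg
    exact (evA v).continuous.comp_continuousOn (h1.clm_apply continuousOn_const)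
  have hIntF' : IntervalIntegrable
      (fun t : ℝ => ((m:ℝ) + 1) * t ^ m * ω (y + t • (x - y)) v +
        t ^ (m + 1) * fderiv ℝ ω (y + t • (x - y)) (x - y) v) volume 0 1 := by
    apply ContinuousOn.intervalIntegrable; rw [huIcc]
    exact ((continuousOn_const.mul (continuous_pow m).continuousOn).mul hC0).add
      (((continuous_pow (m+1)).continuousOn).mul hC1)
  have hderiv : ∀ t ∈ uIcc (0:ℝ) 1,
      HasDerivAt (fun s : ℝ => s ^ (m + 1) * ω (y + s • (x - y)) v)
        (((m:ℝ) + 1) * t ^ m * ω (y + t • (x - y)) v +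
          t ^ (m + 1) * fderiv ℝ ω (y + t • (x - y)) (x - y) v) t := by
    intro t ht
    rw [huIcc] at ht
    have hz : y + t • (x - y) ∈ D := hseg t ht
    have hσ : HasDerivAt (fun s : ℝ => y + s • (x - y)) (x - y) t := by
      have h := ((hasDerivAt_id t).smul_const (x - y)).const_add y
      simpa using h
    have hev := (hasFDerivAt_eval hD hω hz v).comp_hasDerivAt t hσ
    have hpow := hasDerivAt_pow (m + 1) t
    have := hpow.mul hev
    convert this using 1
    · rfl
    · rfl
    · rfl
    simp only [ContinuousLinearMap.coe_comp', Function.comp_apply,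
      ContinuousMultilinearMap.apply_apply, Nat.cast_add, Nat.cast_one,
      Nat.add_sub_cancel]
  rw [intervalIntegral.integral_eq_sub_of_hasDerivAt hderiv hIntF']
  have h1 : y + (1:ℝ) • (x - y) = x := by
    rw [one_smul]; abel
  have h0 : ((0:ℝ)) ^ (m + 1) = 0 := by simp
  rw [h1]
  simp

lemma contAt_param_integral {G : Type*} [NormedAddCommGroup G] [NormedSpace ℝ G]
    {F : E × ℝ → G} {S : Set (E × ℝ)} (hS : IsOpen S) (hF : ContinuousOn F S)
    {U : Set E} (hU : IsOpen U) {y₀ : E} (hy₀ : y₀ ∈ U)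
    (hUS : ∀ y ∈ U, ∀ t ∈ Icc (0:ℝ) 1, ((y, t) : E × ℝ) ∈ S)
    {Cb : ℝ} (hCb : ∀ y ∈ U, ∀ t ∈ Ioc (0:ℝ) 1, ‖F (y, t)‖ ≤ Cb) :
    ContinuousAt (fun y => ∫ t in (0:ℝ)..1, F (y, t)) y₀ := by
  apply intervalIntegral.continuousAt_of_dominated_interval (bound := fun _ => Cb)
  · filter_upwards [hU.mem_nhds hy₀] with y hy
    have hc : ContinuousOn (fun t => F (y, t)) (Icc (0:ℝ) 1) :=
      hF.comp (Continuous.prodMk_right y).continuousOn (fun t ht => hUS y hy t ht)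
    rw [uIoc_of_le zero_le_one]
    exact (hc.mono Ioc_subset_Icc_self).aestronglyMeasurable measurableSet_Ioc
  · filter_upwards [hU.mem_nhds hy₀] with y hy
    refine ae_of_all _ (fun t ht => ?_)
    rw [uIoc_of_le zero_le_one] at ht
    exact hCb y hy t ht
  · exact intervalIntegrable_const
  · refine ae_of_all _ (fun t ht => ?_)
    rw [uIoc_of_le zero_le_one] at ht
    have hmem : ((y₀, t) : E × ℝ) ∈ S := hUS y₀ hy₀ t (Ioc_subset_Icc_self ht)
    exact ContinuousAt.comp (x := y₀) (g := F) (f := fun y => (y, t))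
      (hF.continuousAt (hS.mem_nhds hmem))
      ((continuous_id.prodMk continuous_const).continuousAt)

lemma psi_smul_continuous {G : Type*} [NormedAddCommGroup G] [NormedSpace ℝ G]
    {ψ : E → ℝ} (hψ : Continuous ψ) {U : Set E} (hKU : tsupport ψ ⊆ U) {f : E → G}
    (hf : ∀ y ∈ U, ContinuousAt f y) : Continuous (fun y => ψ y • f y) := by
  rw [continuous_iff_continuousAt]
  intro y₀
  by_cases hy : y₀ ∈ U
  · exact hψ.continuousAt.smul (hf y₀ hy)
  · have h0 : (fun y => ψ y • f y) =ᶠ[nhds y₀] (fun _ => (0:G)) := by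
      have hmem : (tsupport ψ)ᶜ ∈ nhds y₀ :=
        (isClosed_tsupport ψ).isOpen_compl.mem_nhds (fun hc => hy (hKU hc))
      filter_upwards [hmem] with y hy'
      rw [image_eq_zero_of_notMem_tsupport hy', zero_smul]
    exact continuousAt_const.congr h0.symm

lemma inner_integral_hasFDerivAt [FiniteDimensional ℝ E] (hD : IsOpen D) (hω : ContDiffOn ℝ (⊤ : ℕ∞) ω D) {C : Set E}
    (hCD : C ⊆ D) (w : Fin m → E) {y x' : E} {ε R M₀ M₁ : ℝ} (hε : 0 < ε)
    (hmem : ∀ x'' ∈ Metric.ball x' ε, ∀ t ∈ Icc (0:ℝ) 1, y + t • (x'' - y) ∈ C)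
    (hR : ∀ x'' ∈ Metric.ball x' ε, ‖x'' - y‖ ≤ R)
    (hM₀ : ∀ z ∈ C, ‖ω z‖ ≤ M₀) (hM₁ : ∀ z ∈ C, ‖fderiv ℝ ω z‖ ≤ M₁) :
    HasFDerivAt (fun x'' => ∫ t in (0:ℝ)..1, t ^ m * ω (y + t • (x'' - y))
        (Fin.cons (x'' - y) w))
      (∫ t in (0:ℝ)..1, iF' ω y x' w t) x' := by
  have hsect : ∀ x'' ∈ Metric.ball x' ε,
      ContinuousOn (fun t => t ^ m * ω (y + t • (x'' - y)) (Fin.cons (x'' - y) w))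
        (Icc (0:ℝ) 1) := by
    intro x'' hx''
    exact (contOn_scalar_joint hD hω x'' w).comp (Continuous.prodMk_right y).continuousOn
      (fun t ht => hCD (hmem x'' hx'' t ht))
  apply intervalIntegral.hasFDerivAt_integral_of_dominated_of_fderiv_le
    (F' := fun x'' t => iF' ω y x'' w t)
    (bound := fun _ => (∏ i, ‖w i‖) * (M₁ * R + M₀)) (Metric.ball_mem_nhds x' hε)
  · filter_upwards [Metric.ball_mem_nhds x' hε] with x'' hx''
    rw [uIoc_of_le zero_le_one]
    exact ((hsect x'' hx'').mono Ioc_subset_Icc_self).aestronglyMeasurable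
      measurableSet_Ioc
  · apply ContinuousOn.intervalIntegrable
    rw [uIcc_of_le zero_le_one]
    exact hsect x' (Metric.mem_ball_self hε)
  · have hc : ContinuousOn (fun t => iF' ω y x' w t) (Icc (0:ℝ) 1) :=
      (contOn_iF'_joint hD hω x' w).comp (Continuous.prodMk_right y).continuousOn
        (fun t ht => hCD (hmem x' (Metric.mem_ball_self hε) t ht))
    rw [uIoc_of_le zero_le_one]
    exact (hc.mono Ioc_subset_Icc_self).aestronglyMeasurable measurableSet_Ioc
  · refine ae_of_all _ (fun t ht x'' hx'' => ?_)
    rw [uIoc_of_le zero_le_one] at ht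
    refine iF'_norm_le ω y x'' w ht
      (hM₀ _ (hmem x'' hx'' t (Ioc_subset_Icc_self ht)))
      (hM₁ _ (hmem x'' hx'' t (Ioc_subset_Icc_self ht))) (hR x'' hx'')
  · exact intervalIntegrable_const
  · refine ae_of_all _ (fun t ht x'' hx'' => ?_)
    rw [uIoc_of_le zero_le_one] at ht
    exact inner_hasFDerivAt hD hω y w t
      (hCD (hmem x'' hx'' t (Ioc_subset_Icc_self ht)))

lemma scalar_norm_le (y x' : E) (w : Fin m → E) {t : ℝ} (ht : t ∈ Ioc (0:ℝ) 1)
    {M₀ R : ℝ} (h₀ : ‖ω (y + t • (x' - y))‖ ≤ M₀) (hR : ‖x' - y‖ ≤ R) :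
    ‖t ^ m * ω (y + t • (x' - y)) (Fin.cons (x' - y) w)‖
      ≤ M₀ * (R * ∏ i, ‖w i‖) := by
  have hP : (0:ℝ) ≤ ∏ i, ‖w i‖ := by positivity
  have hM0 : (0:ℝ) ≤ M₀ := (norm_nonneg _).trans h₀
  have hR0 : (0:ℝ) ≤ R := (norm_nonneg _).trans hR
  have ht1 : |t| ≤ 1 := by rw [abs_of_pos ht.1]; exact ht.2
  rw [norm_mul, Real.norm_eq_abs, abs_pow]
  calc |t| ^ m * ‖ω (y + t • (x' - y)) (Fin.cons (x' - y) w)‖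
      ≤ 1 * (‖ω (y + t • (x' - y))‖ *
          ∏ i : Fin (m + 1), ‖(Fin.cons (x' - y) w : Fin (m + 1) → E) i‖) :=
        mul_le_mul (pow_le_one₀ (abs_nonneg t) ht1)
          ((ω _).le_opNorm _) (norm_nonneg _) zero_le_one
  _ = ‖ω (y + t • (x' - y))‖ * (‖x' - y‖ * ∏ i, ‖w i‖) := by rw [one_mul, norm_cons_prod]
  _ ≤ M₀ * (R * ∏ i, ‖w i‖) := by
      refine mul_le_mul h₀ (mul_le_mul_of_nonneg_right hR hP) (by positivity) hM0

lemma geometry [ProperSpace E] (hD : IsOpen D) {K : Set E} (hK : IsCompact K)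
    (hKD : K ⊆ D) (hstar : ∀ y ∈ K, StarConvex ℝ y D) {x : E} (hx : x ∈ D) :
    ∃ (C U : Set E) (ε : ℝ), IsCompact C ∧ C ⊆ D ∧ IsOpen U ∧ K ⊆ U ∧
      Bornology.IsBounded U ∧ 0 < ε ∧
      ∀ y ∈ U, ∀ x' ∈ Metric.ball x ε, ∀ t ∈ Icc (0:ℝ) 1, y + t • (x' - y) ∈ C := by
  have hseg_eq : ∀ (y x' : E) (t : ℝ), y + t • (x' - y) = (1 - t) • y + t • x' := by
    intro y x' t; rw [smul_sub, sub_smul, one_smul]; abel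
  set S₀ := (fun p : E × ℝ => (1 - p.2) • p.1 + p.2 • x) '' (K ×ˢ Icc (0:ℝ) 1) with hS₀
  have hS₀c : IsCompact S₀ := (hK.prod isCompact_Icc).image (by fun_prop)
  have hS₀D : S₀ ⊆ D := by
    rintro _ ⟨⟨y, t⟩, ⟨hyK, ht⟩, rfl⟩
    exact hstar y hyK hx (sub_nonneg.2 ht.2) ht.1 (by ring)
  obtain ⟨δ, hδpos, hδ⟩ := hS₀c.exists_cthickening_subset_open hD hS₀D
  refine ⟨Metric.cthickening δ S₀, Metric.thickening (δ/2) K, δ/2,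
    hS₀c.cthickening, hδ, Metric.isOpen_thickening,
    Metric.self_subset_thickening (by linarith) K,
    hK.isBounded.thickening, by linarith, ?_⟩
  intro y hy x' hx' t ht
  obtain ⟨y₀, hy₀K, hyy₀⟩ := Metric.mem_thickening_iff.1 hy
  have hq : (1 - t) • y₀ + t • x ∈ S₀ := ⟨(y₀, t), ⟨hy₀K, ht⟩, rfl⟩
  refine Metric.mem_cthickening_of_dist_le _ _ δ _ hq ?_
  rw [hseg_eq, dist_eq_norm]
  have hdiff : ((1 - t) • y + t • x') - ((1 - t) • y₀ + t • x)
      = (1 - t) • (y - y₀) + t • (x' - x) := by rw [smul_sub, smul_sub]; abel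
  rw [hdiff]
  have h1 : ‖(1 - t) • (y - y₀)‖ ≤ (1 - t) * (δ/2) := by
    rw [norm_smul, Real.norm_eq_abs, abs_of_nonneg (sub_nonneg.2 ht.2)]
    exact mul_le_mul_of_nonneg_left
      (by rw [← dist_eq_norm]; exact hyy₀.le) (sub_nonneg.2 ht.2)
  have h2 : ‖t • (x' - x)‖ ≤ t * (δ/2) := by
    rw [norm_smul, Real.norm_eq_abs, abs_of_nonneg ht.1]
    exact mul_le_mul_of_nonneg_left
      (by rw [← dist_eq_norm]; exact (Metric.mem_ball.1 hx').le) ht.1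
  calc ‖(1 - t) • (y - y₀) + t • (x' - x)‖
      ≤ ‖(1 - t) • (y - y₀)‖ + ‖t • (x' - x)‖ := norm_add_le _ _
  _ ≤ (1 - t) * (δ/2) + t * (δ/2) := add_le_add h1 h2
  _ = δ/2 := by ring
  _ ≤ δ := by linarith

lemma dEval_norm_le (hD : IsOpen D) (hω : ContDiffOn ℝ (⊤ : ℕ∞) ω D) {z : E} (hz : z ∈ D)
    {M₁ : ℝ} (h₁ : ‖fderiv ℝ ω z‖ ≤ M₁) (u : Fin (m + 2) → E) :
    ‖dEval (fun z' (u' : Fin (m + 1) → E) => ω z' u') z u‖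
      ≤ ((m:ℝ) + 2) * (M₁ * ∏ k, ‖u k‖) := by
  have hM1 : (0:ℝ) ≤ M₁ := (ContinuousLinearMap.opNorm_nonneg _).trans h₁
  rw [dEval_eq hD hω hz]
  refine (norm_sum_le _ _).trans ?_
  have hbound : ∀ j : Fin (m + 2),
      ‖(-1:ℝ)^(j:ℕ) * fderiv ℝ ω z (u j) (u ∘ j.succAbove)‖ ≤ M₁ * ∏ k, ‖u k‖ := by
    intro j
    rw [norm_mul, norm_pow, norm_neg, norm_one, one_pow, one_mul]
    calc ‖fderiv ℝ ω z (u j) (u ∘ j.succAbove)‖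
        ≤ ‖fderiv ℝ ω z (u j)‖ * ∏ k : Fin (m + 1), ‖(u ∘ j.succAbove) k‖ :=
          (fderiv ℝ ω z (u j)).le_opNorm _
    _ ≤ (M₁ * ‖u j‖) * ∏ k : Fin (m + 1), ‖u (j.succAbove k)‖ := by
        refine mul_le_mul_of_nonneg_right ?_ (by positivity)
        exact ((fderiv ℝ ω z).le_opNorm (u j)).trans
          (mul_le_mul_of_nonneg_right h₁ (norm_nonneg _))
    _ = M₁ * (‖u j‖ * ∏ k : Fin (m + 1), ‖u (j.succAbove k)‖) := by ring
    _ = M₁ * ∏ k, ‖u k‖ := by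
        rw [← Fin.prod_univ_succAbove (fun k => ‖u k‖) j]
  refine (Finset.sum_le_sum (fun j _ => hbound j)).trans ?_
  rw [Finset.sum_const, Finset.card_univ, Fintype.card_fin, nsmul_eq_mul]
  push_cast
  exact le_of_eq (by ring)

lemma dEval_scalar_norm_le (hD : IsOpen D) (hω : ContDiffOn ℝ (⊤ : ℕ∞) ω D) (x y : E)
    (v : Fin (m + 1) → E) {t : ℝ} (ht : t ∈ Ioc (0:ℝ) 1) (hz : y + t • (x - y) ∈ D)
    {M₁ R : ℝ} (h₁ : ‖fderiv ℝ ω (y + t • (x - y))‖ ≤ M₁) (hR : ‖x - y‖ ≤ R) :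
    ‖t ^ (m + 1) * dEval (fun z' (u' : Fin (m + 1) → E) => ω z' u') (y + t • (x - y))
        (Fin.cons (x - y) v)‖
      ≤ ((m:ℝ) + 2) * (M₁ * (R * ∏ k, ‖v k‖)) := by
  have hM1 : (0:ℝ) ≤ M₁ := (ContinuousLinearMap.opNorm_nonneg _).trans h₁
  have hR0 : (0:ℝ) ≤ R := (norm_nonneg _).trans hR
  have hP : (0:ℝ) ≤ ∏ k, ‖v k‖ := by positivity
  have ht1 : |t| ≤ 1 := by rw [abs_of_pos ht.1]; exact ht.2
  rw [norm_mul, Real.norm_eq_abs, abs_pow]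
  calc |t| ^ (m+1) * ‖(dEval (fun z' (u' : Fin (m + 1) → E) => ω z' u') (y + t • (x - y))
        (Fin.cons (x - y) v))‖
      ≤ 1 * (((m:ℝ) + 2) * (M₁ * ∏ k : Fin (m + 2),
          ‖(Fin.cons (x - y) v : Fin (m + 2) → E) k‖)) :=
        mul_le_mul (pow_le_one₀ (abs_nonneg t) ht1)
          (dEval_norm_le hD hω hz h₁ _) (norm_nonneg _) zero_le_one
  _ = ((m:ℝ) + 2) * (M₁ * (‖x - y‖ * ∏ k, ‖v k‖)) := by rw [one_mul, norm_cons_prod]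
  _ ≤ ((m:ℝ) + 2) * (M₁ * (R * ∏ k, ‖v k‖)) := by
      refine mul_le_mul_of_nonneg_left (mul_le_mul_of_nonneg_left
        (mul_le_mul_of_nonneg_right hR hP) hM1) (by positivity)

end IL


end ILAux


/-- Iwaniec–Lutoborski homotopy formula: let `D ⊆ ℝᴺ` be open and
star-shaped with respect to every point of the support of `ψ ∈ C_c^∞(D)` with
`∫ψ = 1`. For an `h`-form `ω` (`h = m+1 ≥ 1`) set
`Kω(x) = ∫_D ψ(y) ∫₀¹ t^{h−1} ι_{x−y} ω(y+t(x−y)) dt dy`. Then for every smooth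
`h`-form `ω` on `D`, the homotopy formula `ω = d(Kω) + K(dω)` holds on `D`. -/
theorem iwaniec_lutoborski_homotopy (N m : ℕ)
    (D : Set (EuclideanSpace ℝ (Fin N))) (hD : IsOpen D)
    (ψ : EuclideanSpace ℝ (Fin N) → ℝ) (hψ : ContDiff ℝ (⊤ : ℕ∞) ψ)
    (hψc : HasCompactSupport ψ) (hψD : tsupport ψ ⊆ D)
    (hψ1 : (∫ y in D, ψ y) = 1)
    (hstar : ∀ y ∈ tsupport ψ, StarConvex ℝ y D)
    (ω : EuclideanSpace ℝ (Fin N) → FormSpace (EuclideanSpace ℝ (Fin N)) (m + 1))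
    (hωalt : IsAltForm ω) (hω : ContDiffOn ℝ (⊤ : ℕ∞) ω D) :
    ∀ x ∈ D, ∀ v : Fin (m + 1) → EuclideanSpace ℝ (Fin N),
      ω x v =
        dEval (fun x' w => ∫ y in D, ψ y * ∫ t in (0 : ℝ)..1,
            t ^ m * ω (y + t • (x' - y)) (Fin.cons (x' - y) w)) x v
        + ∫ y in D, ψ y * ∫ t in (0 : ℝ)..1,
            t ^ (m + 1) *
              dEval (fun z u => ω z u) (y + t • (x - y)) (Fin.cons (x - y) v) := by
  intro x hx v
  obtain ⟨C, U, ε, hCc, hCD, hUo, hKU, hUb, hεpos, hUC⟩ :=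
    IL.geometry hD hψc hψD hstar hx
  obtain ⟨M₀, hM₀⟩ := hCc.exists_bound_of_continuousOn (hω.continuousOn.mono hCD)
  obtain ⟨M₁, hM₁⟩ := hCc.exists_bound_of_continuousOn
    ((hω.continuousOn_fderiv_of_isOpen hD (by simp)).mono hCD)
  obtain ⟨r, hr⟩ := hUb.subset_closedBall x
  have hRb : ∀ y ∈ U, ∀ x' ∈ Metric.ball x ε, ‖x' - y‖ ≤ ε + r := by
    intro y hy x' hx'
    calc ‖x' - y‖ = dist x' y := (dist_eq_norm _ _).symm
    _ ≤ dist x' x + dist x y := dist_triangle _ _ _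
    _ = dist x' x + dist y x := by rw [dist_comm x y]
    _ ≤ ε + r := add_le_add (le_of_lt (Metric.mem_ball.1 hx')) (hr hy)
  have hxball : x ∈ Metric.ball x ε := Metric.mem_ball_self hεpos
  have hSopen : ∀ x' : EuclideanSpace ℝ (Fin N),
      IsOpen {q : EuclideanSpace ℝ (Fin N) × ℝ | q.1 + q.2 • (x' - q.1) ∈ D} :=
    fun x' => hD.preimage (by fun_prop)
  have hUS : ∀ x' ∈ Metric.ball x ε, ∀ y ∈ U, ∀ t ∈ Icc (0:ℝ) 1,
      ((y, t) : EuclideanSpace ℝ (Fin N) × ℝ) ∈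
        {q : EuclideanSpace ℝ (Fin N) × ℝ | q.1 + q.2 • (x' - q.1) ∈ D} :=
    fun x' hx' y hy t ht => hCD (hUC y hy x' hx' t ht)
  set L := fun (y : EuclideanSpace ℝ (Fin N)) (i : Fin (m + 1)) =>
    (∫ t in (0:ℝ)..1, IL.iF' ω y x (v ∘ i.succAbove) t :
      EuclideanSpace ℝ (Fin N) →L[ℝ] ℝ) with hLdef
  -- continuity and integrability of y ↦ ψ y • L y i
  have hcontL : ∀ i : Fin (m + 1), Continuous (fun y => ψ y • (L y i)) := by
    intro i
    refine IL.psi_smul_continuous (G := EuclideanSpace ℝ (Fin N) →L[ℝ] ℝ)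
      hψ.continuous hKU ?_
    intro y hy
    refine IL.contAt_param_integral (hSopen x) (IL.contOn_iF'_joint hD hω x _) hUo hy
      (hUS x hxball)
      (Cb := (∏ j, ‖(v ∘ i.succAbove) j‖) * (M₁ * (ε + r) + M₀)) ?_
    intro y' hy' t ht
    exact IL.iF'_norm_le ω y' x _ ht
      (hM₀ _ (hUC y' hy' x hxball t (Ioc_subset_Icc_self ht)))
      (hM₁ _ (hUC y' hy' x hxball t (Ioc_subset_Icc_self ht)))
      (hRb y' hy' x hxball)
  have hcompL : ∀ i : Fin (m + 1), HasCompactSupport (fun y => ψ y • (L y i)) :=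
    fun i => hψc.smul_right
  have hintL : ∀ i : Fin (m + 1),
      Integrable (fun y => ψ y • (L y i)) (volume.restrict D) :=
    fun i => ((hcontL i).integrable_of_hasCompactSupport (hcompL i)).restrict
  -- outer derivative
  have houter : ∀ i : Fin (m + 1),
      HasFDerivAt (fun x' => ∫ y in D, ψ y * ∫ t in (0:ℝ)..1,
          t ^ m * ω (y + t • (x' - y)) (Fin.cons (x' - y) (v ∘ i.succAbove)))
        (∫ y in D, ψ y • (L y i)) x := by
    intro i
    have hFcont : ∀ x' ∈ Metric.ball x ε, Continuous (fun y =>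
        ψ y * ∫ t in (0:ℝ)..1, t ^ m * ω (y + t • (x' - y))
          (Fin.cons (x' - y) (v ∘ i.succAbove))) := by
      intro x' hx'
      refine IL.psi_smul_continuous (G := ℝ) hψ.continuous hKU ?_
      intro y hy
      refine IL.contAt_param_integral (hSopen x')
        (IL.contOn_scalar_joint hD hω x' (v ∘ i.succAbove)) hUo hy (hUS x' hx')
        (Cb := M₀ * ((ε + r) * ∏ j, ‖(v ∘ i.succAbove) j‖)) ?_
      intro y' hy' t ht
      exact IL.scalar_norm_le y' x' _ ht
        (hM₀ _ (hUC y' hy' x' hx' t (Ioc_subset_Icc_self ht))) (hRb y' hy' x' hx')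
    refine hasFDerivAt_integral_of_dominated_of_fderiv_le (𝕜 := ℝ)
      (F' := fun x' y => ψ y • (∫ t in (0:ℝ)..1, IL.iF' ω y x' (v ∘ i.succAbove) t))
      (bound := fun y => |ψ y| *
        ((∏ j, ‖(v ∘ i.succAbove) j‖) * (M₁ * (ε + r) + M₀)))
      (Metric.ball_mem_nhds x hεpos) ?_ ?_ ?_ ?_ ?_ ?_
    · filter_upwards [Metric.ball_mem_nhds x hεpos] with x' hx'
      exact (hFcont x' hx').aestronglyMeasurable
    · exact ((hFcont x hxball).integrable_of_hasCompactSupport hψc.mul_right).restrict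
    · exact (hcontL i).aestronglyMeasurable
    · refine ae_of_all _ (fun y x' hx' => ?_)
      by_cases hy : y ∈ U
      · refine (norm_smul_le (ψ y) (∫ t in (0:ℝ)..1, IL.iF' ω y x' (v ∘ i.succAbove) t)).trans ?_
        rw [Real.norm_eq_abs]
        refine mul_le_mul_of_nonneg_left ?_ (abs_nonneg _)
        have hb : ∀ t ∈ Set.uIoc (0:ℝ) 1, ‖IL.iF' ω y x' (v ∘ i.succAbove) t‖ ≤
            (∏ j, ‖(v ∘ i.succAbove) j‖) * (M₁ * (ε + r) + M₀) := by
          intro t ht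
          rw [uIoc_of_le zero_le_one] at ht
          exact IL.iF'_norm_le ω y x' _ ht
            (hM₀ _ (hUC y hy x' hx' t (Ioc_subset_Icc_self ht)))
            (hM₁ _ (hUC y hy x' hx' t (Ioc_subset_Icc_self ht)))
            (hRb y hy x' hx')
        have h2 := intervalIntegral.norm_integral_le_of_norm_le_const hb
        simpa using h2
      · have hψ0 : ψ y = 0 := image_eq_zero_of_notMem_tsupport (fun hc => hy (hKU hc))
        rw [hψ0]
        simp
    · exact ((hψ.continuous.abs.mul continuous_const).integrable_of_hasCompactSupport
        (hψc.abs.mul_right)).restrict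
    · refine ae_of_all _ (fun y x' hx' => ?_)
      by_cases hy : y ∈ U
      · have hεx : 0 < ε - dist x' x := sub_pos.2 (Metric.mem_ball.1 hx')
        have hball : Metric.ball x' (ε - dist x' x) ⊆ Metric.ball x ε :=
          Metric.ball_subset_ball' (le_of_eq (by ring))
        have hinner := IL.inner_integral_hasFDerivAt hD hω hCD (v ∘ i.succAbove) hεx
          (fun x'' hx'' t ht => hUC y hy x'' (hball hx'') t ht)
          (fun x'' hx'' => hRb y hy x'' (hball hx'')) hM₀ hM₁
        exact hinner.const_mul (ψ y)
      · have hψ0 : ψ y = 0 := image_eq_zero_of_notMem_tsupport (fun hc => hy (hKU hc))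
        simp only [hψ0, zero_mul, zero_smul]
        exact hasFDerivAt_const 0 x'
  -- rewrite the dEval term
  have hint_i : ∀ i : Fin (m + 1),
      Integrable (fun y => ψ y * (L y i (v i))) (volume.restrict D) := by
    intro i
    have hc : Continuous (fun y => (ψ y • L y i) (v i)) :=
      (hcontL i).clm_apply continuous_const
    exact (hc.integrable_of_hasCompactSupport hψc.mul_right).restrict
  have happlied : dEval (fun x' w => ∫ y in D, ψ y * ∫ t in (0 : ℝ)..1,
        t ^ m * ω (y + t • (x' - y)) (Fin.cons (x' - y) w)) x v
      = ∑ i : Fin (m + 1), (-1:ℝ)^(i:ℕ) * ∫ y in D, ψ y * (L y i (v i)) := by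
    simp only [dEval]
    refine Finset.sum_congr rfl fun i _ => ?_
    rw [(houter i).fderiv, ContinuousLinearMap.integral_apply (hintL i) (v i)]
    simp only [ContinuousLinearMap.smul_apply, smul_eq_mul]
  -- term2 integrability
  have hcont2 : Continuous (fun y => ψ y * ∫ t in (0:ℝ)..1, t ^ (m + 1) *
      dEval (fun z u => ω z u) (y + t • (x - y)) (Fin.cons (x - y) v)) := by
    refine IL.psi_smul_continuous (G := ℝ) hψ.continuous hKU ?_
    intro y hy
    refine IL.contAt_param_integral (hSopen x) (IL.contOn_dEval_joint hD hω x v) hUo hy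
      (hUS x hxball) (Cb := ((m:ℝ) + 2) * (M₁ * ((ε + r) * ∏ k, ‖v k‖))) ?_
    intro y' hy' t ht
    exact IL.dEval_scalar_norm_le hD hω x y' v ht
      (hCD (hUC y' hy' x hxball t (Ioc_subset_Icc_self ht)))
      (hM₁ _ (hUC y' hy' x hxball t (Ioc_subset_Icc_self ht))) (hRb y' hy' x hxball)
  have hint2 : Integrable (fun y => ψ y * ∫ t in (0:ℝ)..1, t ^ (m + 1) *
      dEval (fun z u => ω z u) (y + t • (x - y)) (Fin.cons (x - y) v))
      (volume.restrict D) :=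
    (hcont2.integrable_of_hasCompactSupport hψc.mul_right).restrict
  have hintSum : Integrable (fun y => ∑ i : Fin (m + 1),
      (-1:ℝ)^(i:ℕ) * (ψ y * (L y i (v i)))) (volume.restrict D) :=
    MeasureTheory.integrable_finset_sum _ (fun i _ => (hint_i i).const_mul _)
  -- pointwise identity
  have hptwise : ∀ y : EuclideanSpace ℝ (Fin N),
      (∑ i : Fin (m + 1), (-1:ℝ)^(i:ℕ) * (ψ y * (L y i (v i))))
        + ψ y * (∫ t in (0:ℝ)..1, t ^ (m + 1) *
            dEval (fun z u => ω z u) (y + t • (x - y)) (Fin.cons (x - y) v))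
      = ψ y * (ω x v) := by
    intro y
    by_cases hyK : y ∈ tsupport ψ
    · have hyU : y ∈ U := hKU hyK
      have hseg' : ∀ t ∈ Icc (0:ℝ) 1, y + t • (x - y) ∈ D :=
        fun t ht => hCD (hUC y hyU x hxball t ht)
      have hLint : ∀ i : Fin (m + 1), IntervalIntegrable
          (fun t => IL.iF' ω y x (v ∘ i.succAbove) t) volume 0 1 := by
        intro i
        apply ContinuousOn.intervalIntegrable
        rw [uIcc_of_le zero_le_one]
        exact (IL.contOn_iF'_joint hD hω x _).comp
          (Continuous.prodMk_right y).continuousOn (fun t ht => hseg' t ht)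
      have hkey := IL.key_pointwise hD hω hωalt x y v hseg'
      have happ : ∀ i : Fin (m + 1), L y i (v i)
          = ∫ t in (0:ℝ)..1, IL.iF' ω y x (v ∘ i.succAbove) t (v i) :=
        fun i => ContinuousLinearMap.intervalIntegral_apply (hLint i) (v i)
      simp_rw [happ]
      have hfact : ∑ i : Fin (m + 1), (-1:ℝ)^(i:ℕ) *
            (ψ y * ∫ t in (0:ℝ)..1, IL.iF' ω y x (v ∘ i.succAbove) t (v i))
          = ψ y * ∑ i : Fin (m + 1), (-1:ℝ)^(i:ℕ) *
            ∫ t in (0:ℝ)..1, IL.iF' ω y x (v ∘ i.succAbove) t (v i) := by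
        rw [Finset.mul_sum]
        exact Finset.sum_congr rfl fun i _ => by ring
      rw [hfact]
      linear_combination (ψ y) * hkey
    · have hψ0 : ψ y = 0 := image_eq_zero_of_notMem_tsupport hyK
      simp [hψ0]
  -- final computation
  calc ω x v = ∫ y in D, ψ y * (ω x v) := by
        rw [MeasureTheory.integral_mul_const, hψ1, one_mul]
  _ = ∫ y in D, ((∑ i : Fin (m + 1), (-1:ℝ)^(i:ℕ) * (ψ y * (L y i (v i))))
        + ψ y * (∫ t in (0:ℝ)..1, t ^ (m + 1) *
            dEval (fun z u => ω z u) (y + t • (x - y)) (Fin.cons (x - y) v))) :=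
      MeasureTheory.integral_congr_ae (ae_of_all _ fun y => (hptwise y).symm)
  _ = (∑ i : Fin (m + 1), (-1:ℝ)^(i:ℕ) * ∫ y in D, ψ y * (L y i (v i)))
        + ∫ y in D, ψ y * (∫ t in (0:ℝ)..1, t ^ (m + 1) *
            dEval (fun z u => ω z u) (y + t • (x - y)) (Fin.cons (x - y) v)) := by
      rw [MeasureTheory.integral_add hintSum hint2,
        MeasureTheory.integral_finset_sum _ (fun i _ => (hint_i i).const_mul _)]
      congr 1
      exact Finset.sum_congr rfl fun i _ => MeasureTheory.integral_const_mul _ _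
  _ = _ := by rw [happlied]

end
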